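/- arXiv:2312.00155 — 4 statements merged into one kernel-verified Lean document; each statement's English description precedes it below -/
import Mathlib

section
/- Let κ ≥ 1 be a natural number, let c, ε, V be real numbers with 0 < c ≤ 1 and ε ≥ 0, and let a : ℕ → ℝ satisfy a(0) ≥ 0 and, for every i < κ, a(i+1) ≥ (c/κ)·V + (1 − c/κ)·a(i) − 2ε. Then a(κ) ≥ (1 − (1 − c/κ)^κ) · (V − 2κε/c). -/
/-!
The recursion `a (i + 1) ≥ (1 - r) M + r a i` is an affine contraction towards its fixed point
`M`; with `r = 1 - c / κ` and `M = V - 2κε/c` it is exactly the hypothesis. Hence the distance to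
`M` below shrinks at least geometrically, `a n - M ≥ rⁿ (a 0 - M)`, and `a 0 ≥ 0` gives
`a n ≥ (1 - rⁿ) M`.
-/

section AffineRecursion

variable {r M : ℝ} {a : ℕ → ℝ} {n : ℕ}

theorem pow_mul_sub_le_sub_of_affine_rec (hr : 0 ≤ r)
    (hrec : ∀ i < n, (1 - r) * M + r * a i ≤ a (i + 1)) :
    r ^ n * (a 0 - M) ≤ a n - M := by
  induction n with
  | zero => simp
  | succ n ih =>
    have hprev := mul_le_mul_of_nonneg_left (ih fun i hi => hrec i (by omega)) hr
    calc r ^ (n + 1) * (a 0 - M) = r * (r ^ n * (a 0 - M)) := by ring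
      _ ≤ r * (a n - M) := hprev
      _ ≤ a (n + 1) - M := by linarith [hrec n n.lt_succ_self]

theorem one_sub_pow_mul_le_of_affine_rec (hr : 0 ≤ r) (ha0 : 0 ≤ a 0)
    (hrec : ∀ i < n, (1 - r) * M + r * a i ≤ a (i + 1)) :
    (1 - r ^ n) * M ≤ a n := by
  have hdist := pow_mul_sub_le_sub_of_affine_rec hr hrec
  nlinarith [pow_nonneg hr n]

end AffineRecursion

theorem greedy_recursion_bound_general (κ : ℕ) (hκ : 1 ≤ κ) (c ε V : ℝ)
    (hc : 0 < c) (hc1 : c ≤ 1)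
    (a : ℕ → ℝ) (ha0 : 0 ≤ a 0)
    (hrec : ∀ i < κ, a (i + 1) ≥ (c / κ) * V + (1 - c / κ) * a i - 2 * ε) :
    a κ ≥ (1 - (1 - c / κ) ^ κ) * (V - 2 * κ * ε / c) := by
  have hκR : (1 : ℝ) ≤ κ := by exact_mod_cast hκ
  have hr : 0 ≤ 1 - c / κ := by
    rw [sub_nonneg, div_le_one (by positivity)]
    linarith
  have hfixed : (1 - (1 - c / κ)) * (V - 2 * κ * ε / c) = c / κ * V - 2 * ε := by
    field_simp
    ring
  refine one_sub_pow_mul_le_of_affine_rec hr ha0 fun i hi => ?_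
  rw [hfixed]
  linarith [hrec i hi]

theorem greedy_recursion_bound (κ : ℕ) (hκ : 1 ≤ κ) (c ε V : ℝ)
    (hc : 0 < c) (hc1 : c ≤ 1) (hε : 0 ≤ ε)
    (a : ℕ → ℝ) (ha0 : 0 ≤ a 0)
    (hrec : ∀ i < κ, a (i + 1) ≥ (c / κ) * V + (1 - c / κ) * a i - 2 * ε) :
    a κ ≥ (1 - (1 - c / κ) ^ κ) * (V - 2 * κ * ε / c) :=
  greedy_recursion_bound_general κ hκ c ε V hc hc1 a ha0 hrec
end

section
/- Let κ ≥ 1 be a natural number, let α ∈ (0,1), let ε ≥ 0 and V ≥ 0 be real numbers, and let a : ℕ → ℝ satisfy a(0) ≥ 0 and, for every i < κ, a(i+1) ≥ ((1−α)/κ)·V + (1 − (1−α)/κ)·a(i) − 2ε. Then a(κ) ≥ (1 − e^{−1} − α)·V − 2κε. -/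
/-!
Unrolling the recurrence gives `a κ ≥ (1 - c ^ κ) V - 2κε` with `c = 1 - (1 - α)/κ`, since each
step contracts the gap to `V` by the factor `c` and loses at most `2ε`. Then
`c ^ κ ≤ exp (α - 1) ≤ exp (-1) + α`, the last step by convexity of `exp` on `[-1, 0]`.
-/

open Real

theorem le_of_affine_lower_recurrence {c δ V : ℝ} {a : ℕ → ℝ} {n : ℕ} (hc0 : 0 ≤ c) (hc1 : c ≤ 1)
    (hδ : 0 ≤ δ) (hrec : ∀ i < n, (1 - c) * V + c * a i - δ ≤ a (i + 1)) :
    (1 - c ^ n) * V + c ^ n * a 0 - n * δ ≤ a n := by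
  induction n with
  | zero => simp
  | succ n ih =>
    have ih := ih fun i hi => hrec i (by omega)
    have hstep := hrec n n.lt_succ_self
    have hloss : c * (n * δ) ≤ n * δ := mul_le_of_le_one_left (by positivity) hc1
    calc (1 - c ^ (n + 1)) * V + c ^ (n + 1) * a 0 - ↑(n + 1) * δ
        = (1 - c) * V + c * ((1 - c ^ n) * V + c ^ n * a 0 - n * δ) - δ
          - (n * δ - c * (n * δ)) := by push_cast; ring
      _ ≤ (1 - c) * V + c * a n - δ := by linarith [mul_le_mul_of_nonneg_left ih hc0]
      _ ≤ a (n + 1) := hstep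

theorem exp_sub_one_le_exp_neg_one_add {α : ℝ} (hα0 : 0 ≤ α) (hα1 : α ≤ 1) :
    exp (α - 1) ≤ exp (-1) + α := by
  have hconv := convexOn_exp.2 (Set.mem_univ (-1 : ℝ)) (Set.mem_univ 0) (sub_nonneg.2 hα1) hα0
    (sub_add_cancel 1 α)
  simp only [smul_eq_mul, mul_zero, add_zero, exp_zero, mul_one] at hconv
  have hexp : (1 - α) * -1 = α - 1 := by ring
  rw [hexp] at hconv
  nlinarith [exp_pos (-1)]

theorem full_budget_approximation (κ : ℕ) (hκ : 1 ≤ κ) (α : ℝ)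
    (hα : α ∈ Set.Ioo (0 : ℝ) 1) (ε V : ℝ) (hε : 0 ≤ ε) (hV : 0 ≤ V)
    (a : ℕ → ℝ) (ha0 : 0 ≤ a 0)
    (hrec : ∀ i < κ, a (i + 1) ≥ ((1 - α) / κ) * V + (1 - (1 - α) / κ) * a i - 2 * ε) :
    a κ ≥ (1 - Real.exp (-1) - α) * V - 2 * κ * ε := by
  obtain ⟨hα0, hα1⟩ := hα
  have hκ1 : (1 : ℝ) ≤ κ := by exact_mod_cast hκ
  set c := 1 - (1 - α) / κ with hc
  have hq1 : (1 - α) / κ ≤ 1 := (div_le_one (by linarith)).2 (by linarith)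
  have hq0 : 0 ≤ (1 - α) / κ := div_nonneg (by linarith) (by linarith)
  have hc0 : 0 ≤ c := by linarith
  have hc1 : c ≤ 1 := by linarith
  have hunroll := le_of_affine_lower_recurrence hc0 hc1 (by positivity : 0 ≤ 2 * ε) (V := V)
    fun i hi => by simpa [hc] using hrec i hi
  have hpow : c ^ κ ≤ exp (-1) + α :=
    (one_sub_div_pow_le_exp_neg (by linarith)).trans <| by
      simpa using exp_sub_one_le_exp_neg_one_add hα0.le hα1.le
  have hstart : 0 ≤ c ^ κ * a 0 := mul_nonneg (pow_nonneg hc0 κ) ha0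
  linarith [mul_le_mul_of_nonneg_right hpow hV]
end

section
/- Let U be a nonempty finite set, let κ ≥ 1 be a natural number, let ε ≥ 0, and let f : Finset U → ℝ be monotone and submodular with f(∅) = 0. Let OPT ⊆ U be a finite subset with |OPT| ≤ κ, and let s ∈ U satisfy f({s}) ≥ (max_{u ∈ U} f({u})) − 2ε. Then f({s}) ≥ f(OPT)/κ − 2ε. -/
open Finset

section Subadditivity

variable {U β : Type*} [DecidableEq U] [AddCommGroup β] [PartialOrder β] [IsOrderedAddMonoid β]

theorem sub_apply_empty_le_sum_singleton (f : Finset U → β)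
    (hsub : ∀ T : Finset U, ∀ u ∉ T, f (insert u T) - f T ≤ f {u} - f ∅) (S : Finset U) :
    f S - f ∅ ≤ ∑ u ∈ S, (f {u} - f ∅) := by
  induction S using Finset.induction_on with
  | empty => simp
  | insert a S ha ih =>
    rw [sum_insert ha]
    calc f (insert a S) - f ∅ = (f (insert a S) - f S) + (f S - f ∅) := by abel
      _ ≤ (f {a} - f ∅) + ∑ u ∈ S, (f {u} - f ∅) := add_le_add (hsub S a ha) ih

end Subadditivity

theorem apply_le_card_mul_sup'_singleton {U : Type*} [Fintype U] [DecidableEq U] [Nonempty U]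
    (f : Finset U → ℝ) (hsub : ∀ T : Finset U, ∀ u ∉ T, f (insert u T) - f T ≤ f {u} - f ∅)
    (hempty : f ∅ = 0) (S : Finset U) :
    f S ≤ S.card * univ.sup' univ_nonempty fun u => f {u} := by
  have hsum := sub_apply_empty_le_sum_singleton f hsub S
  simp only [hempty, sub_zero] at hsum
  calc f S ≤ ∑ u ∈ S, f {u} := hsum
    _ ≤ S.card • univ.sup' univ_nonempty (fun u => f {u}) :=
        sum_le_card_nsmul _ _ _ fun u _ => le_sup' (fun u => f {u}) (mem_univ u)
    _ = _ := nsmul_eq_mul _ _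

theorem first_iteration_gain_general {U : Type*} [Fintype U] [DecidableEq U] [Nonempty U]
    (κ : ℕ) (hκ : 1 ≤ κ) (ε : ℝ) (f : Finset U → ℝ)
    (hmono : ∀ S T : Finset U, S ⊆ T → f S ≤ f T)
    (hsub : ∀ S T : Finset U, S ⊆ T → ∀ u ∉ T,
      f (insert u T) - f T ≤ f (insert u S) - f S)
    (hempty : f ∅ = 0)
    (OPT : Finset U) (hOPT : OPT.card ≤ κ)
    (s : U)
    (hs : f {s} ≥ (Finset.univ.sup' Finset.univ_nonempty fun u => f {u}) - 2 * ε) :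
    f {s} ≥ f OPT / κ - 2 * ε := by
  set M := univ.sup' univ_nonempty fun u => f {u}
  have hM : 0 ≤ M := by
    obtain ⟨u⟩ := ‹Nonempty U›
    calc 0 = f ∅ := hempty.symm
      _ ≤ f {u} := hmono _ _ (empty_subset _)
      _ ≤ M := le_sup' (fun u => f {u}) (mem_univ u)
  have hOPT_le : f OPT ≤ κ * M :=
    (apply_le_card_mul_sup'_singleton f
      (fun T u hu => by simpa using hsub ∅ T (empty_subset T) u hu) hempty OPT).trans
      (mul_le_mul_of_nonneg_right (by exact_mod_cast hOPT) hM)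
  have hκ_pos : (0 : ℝ) < κ := by exact_mod_cast hκ
  have : f OPT / κ ≤ M := (div_le_iff₀ hκ_pos).2 (by linarith)
  linarith

theorem first_iteration_gain {U : Type*} [Fintype U] [DecidableEq U] [Nonempty U]
    (κ : ℕ) (hκ : 1 ≤ κ) (ε : ℝ) (hε : 0 ≤ ε) (f : Finset U → ℝ)
    (hmono : ∀ S T : Finset U, S ⊆ T → f S ≤ f T)
    (hsub : ∀ S T : Finset U, S ⊆ T → ∀ u ∉ T,
      f (insert u T) - f T ≤ f (insert u S) - f S)
    (hempty : f ∅ = 0)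
    (OPT : Finset U) (hOPT : OPT.card ≤ κ)
    (s : U)
    (hs : f {s} ≥ (Finset.univ.sup' Finset.univ_nonempty fun u => f {u}) - 2 * ε) :
    f {s} ≥ f OPT / κ - 2 * ε :=
  first_iteration_gain_general κ hκ ε f hmono hsub hempty OPT hOPT s hs
end

section
/- Let U be a finite set, let κ ≥ 1 be a natural number, let α ∈ (0,1), ε ≥ 0, and w be real numbers, and let f : Finset U → ℝ be monotone and submodular. Let S, OPT ⊆ U be finite subsets with |OPT| ≤ κ, and let s ∈ U. Suppose that for every o ∈ OPT \ S, f(S ∪ {o}) − f(S) ≤ w/(1−α) + ε, and that f(S ∪ {s}) − f(S) ≥ w − ε. Then f(S ∪ {s}) − f(S) ≥ (1−α)·(f(OPT) − f(S))/κ − 2ε. -/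
/-!
By submodularity, `f OPT - f S ≤ f (S ∪ OPT) - f S` is at most the sum of the marginal gains
`f (S ∪ {o}) - f S` over `o ∈ OPT \ S`, each of which is at most `w / (1 - α) + ε`; hence
`(1 - α) (f OPT - f S) / κ ≤ w + (1 - α) ε`, and the gain of `s` is at least `w - ε`.
The gain of `s` is also nonnegative, which covers the case where the threshold bound is negative.
-/

open Finset

section MarginalGain

variable {U : Type*} [DecidableEq U] {f : Finset U → ℝ}

theorem sub_le_sum_marginal_gain (hmono : Monotone f)
    (hsub : ∀ S T : Finset U, S ⊆ T → ∀ u ∉ T,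
      f (insert u T) - f T ≤ f (insert u S) - f S)
    (S A : Finset U) :
    f (S ∪ A) - f S ≤ ∑ a ∈ A, (f (insert a S) - f S) := by
  induction A using Finset.induction_on with
  | empty => simp
  | insert a A ha ih =>
    rw [sum_insert ha, union_insert]
    by_cases haSA : a ∈ S ∪ A
    · rw [insert_eq_self.mpr haSA]
      have := hmono (subset_insert a S)
      linarith
    · have := hsub S (S ∪ A) subset_union_left a haSA
      linarith

theorem sub_le_card_mul_of_marginal_gain_le (hmono : Monotone f)
    (hsub : ∀ S T : Finset U, S ⊆ T → ∀ u ∉ T,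
      f (insert u T) - f T ≤ f (insert u S) - f S)
    {S T : Finset U} {κ : ℕ} (hT : T.card ≤ κ) {B : ℝ}
    (hgain : ∀ o ∈ T \ S, f (insert o S) - f S ≤ B) :
    f T - f S ≤ κ * max B 0 :=
  calc f T - f S ≤ f (S ∪ (T \ S)) - f S := by
        rw [union_sdiff_self_eq_union]
        exact sub_le_sub_right (hmono subset_union_right) _
    _ ≤ ∑ o ∈ T \ S, (f (insert o S) - f S) := sub_le_sum_marginal_gain hmono hsub S _
    _ ≤ ∑ _o ∈ T \ S, max B 0 :=
        sum_le_sum fun o ho => (hgain o ho).trans (le_max_left _ _)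
    _ = (T \ S).card * max B 0 := by rw [sum_const, nsmul_eq_mul]
    _ ≤ κ * max B 0 := by
        gcongr
        exact (card_le_card sdiff_subset).trans hT

end MarginalGain

theorem later_iteration_gain_general {U : Type*} [DecidableEq U]
    (κ : ℕ) (α ε w : ℝ) (hα : α ∈ Set.Ioo (0 : ℝ) 1) (hε : 0 ≤ ε)
    (f : Finset U → ℝ)
    (hmono : ∀ S T : Finset U, S ⊆ T → f S ≤ f T)
    (hsub : ∀ S T : Finset U, S ⊆ T → ∀ u ∉ T,
      f (insert u T) - f T ≤ f (insert u S) - f S)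
    (S OPT : Finset U) (hOPT : OPT.card ≤ κ) (s : U)
    (hout : ∀ o ∈ OPT \ S, f (insert o S) - f S ≤ w / (1 - α) + ε)
    (hs : f (insert s S) - f S ≥ w - ε) :
    f (insert s S) - f S ≥ (1 - α) * (f OPT - f S) / κ - 2 * ε := by
  obtain ⟨hα0, hα1⟩ := hα
  have hmono' : Monotone f := fun S T h => hmono S T h
  have hs_nonneg : 0 ≤ f (insert s S) - f S := sub_nonneg.2 (hmono' (subset_insert s S))
  have hOPT_gain := sub_le_card_mul_of_marginal_gain_le hmono' hsub hOPT hout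
  have hscaled : (1 - α) * (f OPT - f S) / κ ≤ (1 - α) * max (w / (1 - α) + ε) 0 :=
    div_le_of_le_mul₀ κ.cast_nonneg (by positivity) <|
      (mul_le_mul_of_nonneg_left hOPT_gain (by linarith)).trans_eq (by ring)
  have hthreshold : (1 - α) * max (w / (1 - α) + ε) 0 = max (w + (1 - α) * ε) 0 := by
    rw [mul_max_of_nonneg _ _ (by linarith), mul_zero, mul_add,
      mul_div_cancel₀ _ (by linarith)]
  have hthreshold_le : max (w + (1 - α) * ε) 0 ≤ f (insert s S) - f S + 2 * ε :=
    max_le (by nlinarith) (by linarith)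
  linarith

theorem later_iteration_gain {U : Type*} [Fintype U] [DecidableEq U]
    (κ : ℕ) (hκ : 1 ≤ κ) (α ε w : ℝ) (hα : α ∈ Set.Ioo (0 : ℝ) 1) (hε : 0 ≤ ε)
    (f : Finset U → ℝ)
    (hmono : ∀ S T : Finset U, S ⊆ T → f S ≤ f T)
    (hsub : ∀ S T : Finset U, S ⊆ T → ∀ u ∉ T,
      f (insert u T) - f T ≤ f (insert u S) - f S)
    (S OPT : Finset U) (hOPT : OPT.card ≤ κ) (s : U)
    (hout : ∀ o ∈ OPT \ S, f (insert o S) - f S ≤ w / (1 - α) + ε)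
    (hs : f (insert s S) - f S ≥ w - ε) :
    f (insert s S) - f S ≥ (1 - α) * (f OPT - f S) / κ - 2 * ε :=
  later_iteration_gain_general κ α ε w hα hε f hmono hsub S OPT hOPT s hout hs
end
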